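/- (Closed form of the efficiency under Gaussian noise.) Fix ℓ > 0 and τ > 0, and let B be a Gaussian random variable with mean −τ²/2 and variance τ². Then E[Φ(B/ℓ − ℓ/2)] = Φ(−√(τ² + ℓ²)/2), where Φ is the standard normal cumulative distribution function. Consequently, with B ∼ N(−σ², 2σ²) (i.e. τ² = 2σ²), the efficiency Eff_{σ²}(ℓ) := σ² · ℓ² · 2·E[Φ(B/ℓ − ℓ/2)] equals τ² ℓ² Φ(−√(τ² + ℓ²)/2) with τ² = 2σ². -/

import Mathlib

open MeasureTheory ProbabilityTheory Real

/-- The standard normal cumulative distribution function `Φ`. -/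
noncomputable def stdNormalCDF (x : ℝ) : ℝ :=
  ∫ t in Set.Iic x, Real.exp (-t ^ 2 / 2) / Real.sqrt (2 * Real.pi)

open scoped NNReal ENNReal

lemma nnreal_coe_mk' (a : ℝ) (ha : 0 ≤ a) : NNReal.toReal ⟨a, ha⟩ = a := rfl

lemma gpdf01 (t : ℝ) :
    gaussianPDFReal 0 1 t = Real.exp (-t ^ 2 / 2) / Real.sqrt (2 * Real.pi) := by
  simp [gaussianPDFReal, div_eq_mul_inv, mul_comm]

lemma stdNormalCDF_eq (x : ℝ) :
    stdNormalCDF x = ∫ t in Set.Iic x, gaussianPDFReal 0 1 t := by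
  simp [stdNormalCDF, gpdf01]

lemma continuous_gpdf (μ : ℝ) (v : ℝ≥0) : Continuous (gaussianPDFReal μ v) := by
  unfold gaussianPDFReal; fun_prop

lemma stdNormalCDF_mono : Monotone stdNormalCDF := fun x y hxy => by
  rw [stdNormalCDF_eq, stdNormalCDF_eq]
  exact setIntegral_mono_set (integrable_gaussianPDFReal 0 1).integrableOn
    (ae_of_all _ (gaussianPDFReal_nonneg 0 1))
    (HasSubset.Subset.eventuallyLE (Set.Iic_subset_Iic.2 hxy))

lemma meas_cdf : Measurable stdNormalCDF := stdNormalCDF_mono.measurable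

lemma cdf_nonneg (x : ℝ) : 0 ≤ stdNormalCDF x := by
  rw [stdNormalCDF_eq]
  exact setIntegral_nonneg measurableSet_Iic fun t _ => gaussianPDFReal_nonneg 0 1 t

lemma cdf_le_one (x : ℝ) : stdNormalCDF x ≤ 1 := by
  rw [stdNormalCDF_eq]
  calc ∫ t in Set.Iic x, gaussianPDFReal 0 1 t ≤ ∫ t, gaussianPDFReal 0 1 t :=
        setIntegral_le_integral (integrable_gaussianPDFReal 0 1)
          (ae_of_all _ (gaussianPDFReal_nonneg 0 1))
    _ = 1 := integral_gaussianPDFReal_eq_one 0 one_ne_zero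

lemma Iic_shift (f : ℝ → ℝ) (a d : ℝ) :
    ∫ s in Set.Iic a, f (s + d) = ∫ t in Set.Iic (a + d), f t := by
  rw [← integral_indicator measurableSet_Iic, ← integral_indicator measurableSet_Iic]
  have h : ∀ s, (Set.Iic a).indicator (fun s => f (s + d)) s
      = (Set.Iic (a + d)).indicator f (s + d) := by
    intro s
    by_cases hs : s ≤ a
    · rw [Set.indicator_of_mem (Set.mem_Iic.2 hs), Set.indicator_of_mem (Set.mem_Iic.2 (by linarith))]
    · rw [Set.indicator_of_notMem (by simpa using hs),
        Set.indicator_of_notMem (by simp only [Set.mem_Iic]; intro h; exact hs (by linarith))]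
  simp_rw [h]
  exact integral_add_right_eq_self _ d

lemma integral_gaussianReal_eq (f : ℝ → ℝ) (μ : ℝ) {v : ℝ≥0} (hv : v ≠ 0) :
    ∫ x, f x ∂(gaussianReal μ v) = ∫ x, gaussianPDFReal μ v x * f x := by
  rw [gaussianReal_of_var_ne_zero _ hv]
  rw [show gaussianPDF μ v
      = fun x => (((fun x => (gaussianPDFReal μ v x).toNNReal) x : ℝ≥0) : ℝ≥0∞) from rfl]
  rw [integral_withDensity_eq_integral_smul
    (by exact (measurable_gaussianPDFReal μ v).real_toNNReal) f]
  congr 1; ext x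
  simp [NNReal.smul_def, Real.coe_toNNReal _ (gaussianPDFReal_nonneg μ v x)]

lemma gpdf_prod (b s z : ℝ) :
    gaussianPDFReal 0 1 (s + b * z) * gaussianPDFReal 0 1 z
      = gaussianPDFReal 0 ⟨1 + b ^ 2, by positivity⟩ s *
        gaussianPDFReal (-(b * s) / (1 + b ^ 2)) ⟨(1 + b ^ 2)⁻¹, by positivity⟩ z := by
  have hc : (0:ℝ) < 1 + b ^ 2 := by positivity
  unfold gaussianPDFReal
  simp only [NNReal.coe_mk, nnreal_coe_mk', NNReal.coe_one, sub_zero, mul_one]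
  rw [show ∀ (A B C D : ℝ), A⁻¹ * rexp B * (C⁻¹ * rexp D) = (A * C)⁻¹ * rexp (B + D) from
    fun A B C D => by rw [Real.exp_add, mul_inv]; ring,
    show ∀ (A B C D : ℝ), A⁻¹ * rexp B * (C⁻¹ * rexp D) = (A * C)⁻¹ * rexp (B + D) from
    fun A B C D => by rw [Real.exp_add, mul_inv]; ring]
  have hpi := Real.pi_pos
  congr 1
  · rw [← Real.sqrt_mul (by positivity), ← Real.sqrt_mul (by positivity)]
    congr 2
    field_simp
  · congr 1
    field_simp
    ring

lemma gpdf_inner (b s : ℝ) :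
    ∫ z, gaussianPDFReal 0 1 (s + b * z) * gaussianPDFReal 0 1 z
      = gaussianPDFReal 0 ⟨1 + b ^ 2, by positivity⟩ s := by
  have hv : (⟨(1 + b ^ 2)⁻¹, by positivity⟩ : ℝ≥0) ≠ 0 := by
    intro h
    have h2 := congrArg NNReal.toReal h
    simp only [NNReal.coe_mk, nnreal_coe_mk', NNReal.coe_zero] at h2
    exact (by positivity : (0:ℝ) < (1 + b ^ 2)⁻¹).ne' h2
  simp_rw [gpdf_prod b s]
  rw [integral_const_mul, integral_gaussianPDFReal_eq_one _ hv, mul_one]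

lemma cdf_scale (a : ℝ) {c : ℝ} (hcpos : 0 < c) :
    ∫ s in Set.Iic a, gaussianPDFReal 0 ⟨c ^ 2, sq_nonneg c⟩ s = stdNormalCDF (a / c) := by
  set v : ℝ≥0 := ⟨c ^ 2, sq_nonneg c⟩ with hv_def
  have hv : v ≠ 0 := by
    simp only [hv_def, ne_eq, ← NNReal.coe_eq_zero, NNReal.coe_mk, nnreal_coe_mk']
    intro h
    have h2 := congrArg NNReal.toReal h
    simp only [nnreal_coe_mk', NNReal.coe_zero] at h2
    exact (pow_pos hcpos 2).ne' h2
  have h2 : gaussianReal 0 v = (gaussianReal 0 1).map (c * ·) := by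
    rw [gaussianReal_map_const_mul]
    congr 1
    · simp
    · ext
      simp [hv_def, nnreal_coe_mk']
  have h3 : (c * ·) ⁻¹' Set.Iic a = Set.Iic (a / c) := by
    ext z
    simp [Set.mem_Iic, le_div_iff₀' hcpos]
  have h4 : gaussianReal 0 v (Set.Iic a) = gaussianReal 0 1 (Set.Iic (a / c)) := by
    rw [h2, Measure.map_apply (measurable_const_mul c) measurableSet_Iic, h3]
  rw [gaussianReal_apply_eq_integral _ hv, gaussianReal_apply_eq_integral _ one_ne_zero] at h4
  have h5 := congrArg ENNReal.toReal h4
  rw [ENNReal.toReal_ofReal (setIntegral_nonneg measurableSet_Iic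
        fun t _ => gaussianPDFReal_nonneg _ _ t),
      ENNReal.toReal_ofReal (setIntegral_nonneg measurableSet_Iic
        fun t _ => gaussianPDFReal_nonneg _ _ t)] at h5
  rw [h5, stdNormalCDF_eq]

set_option maxHeartbeats 1000000 in
lemma gauss_cdf_integral (a b : ℝ) :
    ∫ z, stdNormalCDF (a + b * z) ∂(gaussianReal 0 1)
      = stdNormalCDF (a / Real.sqrt (1 + b ^ 2)) := by
  have hc : (0:ℝ) < 1 + b ^ 2 := by positivity
  rw [integral_gaussianReal_eq _ 0 one_ne_zero]
  have hΦ : ∀ z : ℝ, stdNormalCDF (a + b * z)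
      = ∫ s in Set.Iic a, gaussianPDFReal 0 1 (s + b * z) := by
    intro z
    rw [Iic_shift (gaussianPDFReal 0 1) a (b * z), stdNormalCDF_eq]
  simp_rw [hΦ, ← integral_const_mul]
  -- Fubini
  have hF : Integrable (Function.uncurry fun z s =>
      gaussianPDFReal 0 1 z * gaussianPDFReal 0 1 (s + b * z))
      (volume.prod (volume.restrict (Set.Iic a))) := by
    have hmeas : AEStronglyMeasurable (Function.uncurry fun z s =>
        gaussianPDFReal 0 1 z * gaussianPDFReal 0 1 (s + b * z))
        (volume.prod (volume.restrict (Set.Iic a))) := by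
      apply Continuous.aestronglyMeasurable
      exact ((continuous_gpdf 0 1).comp continuous_fst).mul
        ((continuous_gpdf 0 1).comp (continuous_snd.add (continuous_const.mul continuous_fst)))
    rw [integrable_prod_iff hmeas]
    simp only [Function.uncurry_apply_pair]
    constructor
    · refine ae_of_all _ fun z => ?_
      exact (((integrable_gaussianPDFReal 0 1).comp_add_right (b * z)).const_mul
        (gaussianPDFReal 0 1 z)).restrict
    · have hval : ∀ z : ℝ, (∫ s in Set.Iic a,
          ‖gaussianPDFReal 0 1 z * gaussianPDFReal 0 1 (s + b * z)‖)
          = gaussianPDFReal 0 1 z * stdNormalCDF (a + b * z) := by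
        intro z
        rw [hΦ z, ← integral_const_mul]
        refine setIntegral_congr_fun measurableSet_Iic fun s _ => ?_
        rw [Real.norm_of_nonneg
          (mul_nonneg (gaussianPDFReal_nonneg 0 1 z) (gaussianPDFReal_nonneg 0 1 _))]
      simp_rw [hval]
      apply Integrable.mono' (integrable_gaussianPDFReal 0 1)
      · exact ((measurable_gaussianPDFReal 0 1).mul
          (meas_cdf.comp (measurable_const.add (measurable_const_mul b)))).aestronglyMeasurable
      · refine ae_of_all _ fun z => ?_
        rw [Real.norm_of_nonneg (mul_nonneg (gaussianPDFReal_nonneg 0 1 z) (cdf_nonneg _))]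
        calc gaussianPDFReal 0 1 z * stdNormalCDF (a + b * z)
            ≤ gaussianPDFReal 0 1 z * 1 :=
              mul_le_mul_of_nonneg_left (cdf_le_one _) (gaussianPDFReal_nonneg 0 1 z)
          _ = gaussianPDFReal 0 1 z := mul_one _
  rw [integral_integral_swap hF]
  have hswap : ∀ s : ℝ, (∫ z, gaussianPDFReal 0 1 z * gaussianPDFReal 0 1 (s + b * z))
      = gaussianPDFReal 0 ⟨1 + b ^ 2, by positivity⟩ s := by
    intro s
    rw [← gpdf_inner b s]
    simp_rw [mul_comm]
  simp_rw [hswap]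
  have hsq : (⟨1 + b ^ 2, hc.le⟩ : ℝ≥0)
      = ⟨(Real.sqrt (1 + b ^ 2)) ^ 2, sq_nonneg _⟩ := by
    exact Subtype.ext (by simp [Real.sq_sqrt hc.le])
  rw [show (⟨1 + b ^ 2, by positivity⟩ : ℝ≥0) = ⟨(Real.sqrt (1 + b ^ 2)) ^ 2, sq_nonneg _⟩ from hsq]
  exact cdf_scale a (Real.sqrt_pos.2 hc)

lemma gaussianReal_repr (m : ℝ) {t : ℝ} (ht : 0 < t) :
    gaussianReal m ⟨t ^ 2, sq_nonneg t⟩ = ((gaussianReal 0 1).map (t * ·)).map (· + m) := by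
  rw [gaussianReal_map_const_mul, gaussianReal_map_add_const]
  congr 1
  · simp
  · rw [mul_one]; rfl

lemma part1 (ℓ τ : ℝ) (hℓ : 0 < ℓ) (hτ : 0 < τ) :
    (∫ b, stdNormalCDF (b / ℓ - ℓ / 2)
        ∂(gaussianReal (-τ ^ 2 / 2) ⟨τ ^ 2, sq_nonneg τ⟩)) =
      stdNormalCDF (-Real.sqrt (τ ^ 2 + ℓ ^ 2) / 2) := by
  rw [gaussianReal_repr (-τ ^ 2 / 2) hτ]
  have hmm : ∀ c : ℝ, Measurable (fun b : ℝ => stdNormalCDF (b / ℓ - c)) := fun c => by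
    exact meas_cdf.comp (by fun_prop)
  have hm1 : AEStronglyMeasurable (fun b : ℝ => stdNormalCDF (b / ℓ - ℓ / 2))
      (((gaussianReal 0 1).map (fun x => τ * x)).map (fun x => x + -τ ^ 2 / 2)) :=
    (hmm _).aestronglyMeasurable
  rw [integral_map (by fun_prop) hm1]
  have hm2 : AEStronglyMeasurable (fun x : ℝ => stdNormalCDF ((x + -τ ^ 2 / 2) / ℓ - ℓ / 2))
      ((gaussianReal 0 1).map (fun x => τ * x)) := by
    refine Measurable.aestronglyMeasurable ?_
    exact meas_cdf.comp (by fun_prop)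
  rw [integral_map (by fun_prop) hm2]
  have heq : ∀ z : ℝ, stdNormalCDF ((τ * z + -τ ^ 2 / 2) / ℓ - ℓ / 2)
      = stdNormalCDF (-(τ ^ 2 + ℓ ^ 2) / (2 * ℓ) + (τ / ℓ) * z) := by
    intro z
    congr 1
    field_simp
    ring
  simp_rw [heq, gauss_cdf_integral]
  congr 1
  have hpos : (0:ℝ) < τ ^ 2 + ℓ ^ 2 := by positivity
  have hS : (0:ℝ) < Real.sqrt (τ ^ 2 + ℓ ^ 2) := Real.sqrt_pos.2 hpos
  have hS2 : Real.sqrt (τ ^ 2 + ℓ ^ 2) ^ 2 = τ ^ 2 + ℓ ^ 2 := Real.sq_sqrt hpos.le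
  have h1 : (1 : ℝ) + (τ / ℓ) ^ 2 = (τ ^ 2 + ℓ ^ 2) / ℓ ^ 2 := by
    field_simp
    ring
  rw [h1, Real.sqrt_div hpos.le, Real.sqrt_sq hℓ.le]
  field_simp
  nlinarith [hS2, hS, hℓ]

/-- closed form of the efficiency under Gaussian noise.  For
`B ∼ N(−τ²/2, τ²)`, `E[Φ(B/ℓ − ℓ/2)] = Φ(−√(τ² + ℓ²)/2)`; consequently, with
`B ∼ N(−σ², 2σ²)`, `Eff_{σ²}(ℓ) = σ² ℓ² 2 E[Φ(B/ℓ − ℓ/2)] = τ² ℓ² Φ(−√(τ² + ℓ²)/2)`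
with `τ² = 2σ²`. -/
theorem stmt10 (ℓ τ σ : ℝ) (hℓ : 0 < ℓ) (hτ : 0 < τ) (hσ : 0 < σ) :
    (∫ b, stdNormalCDF (b / ℓ - ℓ / 2)
        ∂(gaussianReal (-τ ^ 2 / 2) ⟨τ ^ 2, sq_nonneg τ⟩)) =
      stdNormalCDF (-Real.sqrt (τ ^ 2 + ℓ ^ 2) / 2) ∧
    σ ^ 2 * ℓ ^ 2 *
        (2 * ∫ b, stdNormalCDF (b / ℓ - ℓ / 2)
          ∂(gaussianReal (-σ ^ 2) ⟨2 * σ ^ 2, by positivity⟩)) =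
      2 * σ ^ 2 * ℓ ^ 2 * stdNormalCDF (-Real.sqrt (2 * σ ^ 2 + ℓ ^ 2) / 2) := by
  refine ⟨part1 ℓ τ hℓ hτ, ?_⟩
  have hsq2 : (Real.sqrt 2 * σ) ^ 2 = 2 * σ ^ 2 := by
    rw [mul_pow, Real.sq_sqrt (by norm_num : (0:ℝ) ≤ 2)]
  have h2 : (⟨2 * σ ^ 2, by positivity⟩ : ℝ≥0) = ⟨(Real.sqrt 2 * σ) ^ 2, sq_nonneg _⟩ :=
    Subtype.ext (by simp [hsq2])
  have h3 : (-σ ^ 2 : ℝ) = -(Real.sqrt 2 * σ) ^ 2 / 2 := by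
    rw [hsq2]; ring
  rw [h2, h3, part1 ℓ (Real.sqrt 2 * σ) hℓ (by positivity), hsq2]
  ring
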